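/- Let H be a Hermitian D×D matrix and H' a Hermitian D'×D' matrix over ℂ, let p, q ∈ ℕ with r = p + q ≥ 1, and let P, Q be orthogonal projectors on ℂ^r with PQ = 0, P + Q = 1, rank(P) = p and rank(Q) = q. Suppose Δ, ε ≥ 0 and Ṽ : ℂ^D ⊗ ℂ^r → ℂ^{D'} is an isometry whose range equals S_{≤Δ}(H'), and that ‖H'|_{≤Δ} − Ṽ(H⊗P + H̄⊗Q)Ṽ†‖ ≤ ε, where H̄ denotes the entrywise complex conjugate of H and ‖·‖ is the operator norm. List the eigenvalues of H in nondecreasing order λ₁(H) ≤ … ≤ λ_D(H) and those of H' in nondecreasing order λ₁(H') ≤ … ≤ λ_{D'}(H'), with multiplicity. Then for every i with 1 ≤ i ≤ D and every j with (i−1)r < j ≤ ir, one has |λ_i(H) − λ_j(H')| ≤ ε. -/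

import Mathlib

open Matrix Kronecker

/-- The operator norm (ℓ²→ℓ² norm) of a complex matrix. -/
noncomputable def opNorm {m n : Type*} [Fintype m] [Fintype n] [DecidableEq n]
    (M : Matrix m n ℂ) : ℝ :=
  ‖LinearMap.toContinuousLinearMap (Matrix.toEuclideanLin M)‖

/-- `S_{≤Δ}(M)`: the span of eigenvectors of `M` with (real) eigenvalue at most `Δ`. -/
noncomputable def lowEnergy {D : Type*} [Fintype D] [DecidableEq D]
    (M : Matrix D D ℂ) (Δ : ℝ) : Submodule ℂ (EuclideanSpace ℂ D) :=
  ⨆ (μ : ℝ) (_ : μ ≤ Δ), Module.End.eigenspace (Matrix.toEuclideanLin M) (μ : ℂ)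

/-- The eigenvalues of a Hermitian matrix listed in nondecreasing order (with
multiplicity); `sortedEigs hM` is the list `λ₁ ≤ λ₂ ≤ …`, 0-indexed. -/
noncomputable def sortedEigs {D : ℕ} {M : Matrix (Fin D) (Fin D) ℂ}
    (hM : M.IsHermitian) : List ℝ :=
  (Finset.univ.val.map hM.eigenvalues).sort (· ≤ ·)

/-!
Write `A = H ⊗ P + H̄ ⊗ Q`. If `b` is an eigenbasis of `H` and `c` one of `P`, whose eigenvalues
are `0` and `1`, the vectors `b m ⊗ c k` (for `P c k = c k`) and `b̄ m ⊗ c k` (for `Q c k = c k`)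
form an orthonormal eigenbasis of `A` in which each eigenvalue `λ_m(H)` occurs `r` times.
Because `Ṽ` is an isometry, the hypothesis on the operator norm says that the quadratic forms of
`H'` and `A` agree along `Ṽ` up to `ε ‖y‖²`.

Courant–Fischer applied to the `(i+1)r`-dimensional image under `Ṽ` of the lowest eigenvectors
of `A` gives `λ_j(H') ≤ λ_i(H) + ε`. For the other inequality, `S_{≤Δ}(H')` is spanned by the
eigenvectors of `H'` with eigenvalue at most `Δ` and has dimension `Dr > j`, so it contains the
`j+1` lowest eigenvectors of `H'`; inside it their span meets the `(D-i)r`-dimensional image of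
the eigenvectors of `A` with eigenvalue at least `λ_i(H)`, and a common nonzero vector gives
`λ_i(H) - ε ≤ λ_j(H')`.
-/

open scoped InnerProductSpace

lemma Submodule.exists_ne_zero_mem_inf_of_finrank_lt {K V : Type*} [DivisionRing K]
    [AddCommGroup V] [Module K V] [FiniteDimensional K V] {S W₁ W₂ : Submodule K V}
    (h₁ : W₁ ≤ S) (h₂ : W₂ ≤ S)
    (hdim : Module.finrank K S < Module.finrank K W₁ + Module.finrank K W₂) :
    ∃ x ∈ W₁ ⊓ W₂, x ≠ 0 := by
  by_contra! h
  have hsum := Submodule.finrank_sup_add_finrank_inf_eq W₁ W₂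
  rw [(Submodule.eq_bot_iff _).mpr h, finrank_bot, add_zero] at hsum
  have := Submodule.finrank_mono (sup_le h₁ h₂)
  omega

section EigenbasisForm

variable {𝕜 E ι : Type*} [RCLike 𝕜] [NormedAddCommGroup E] [InnerProductSpace 𝕜 E]

lemma OrthonormalBasis.finrank_span_image [Fintype ι] (v : OrthonormalBasis ι 𝕜 E)
    (s : Finset ι) : Module.finrank 𝕜 (Submodule.span 𝕜 (v '' s)) = s.card := by
  classical
  have hv := v.orthonormal.linearIndependent
  rw [← Finset.coe_image, finrank_span_finset_eq_card, Finset.card_image_of_injective _ hv.injective]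
  rw [Finset.coe_image]
  exact (hv.linearIndepOn _).id_image

lemma OrthonormalBasis.inner_eq_zero_of_mem_span [Fintype ι] (v : OrthonormalBasis ι 𝕜 E)
    {s : Set ι} {x : E} (hx : x ∈ Submodule.span 𝕜 (v '' s)) {i : ι} (hi : i ∉ s) :
    ⟪v i, x⟫_𝕜 = 0 := by
  rw [← v.coe_toBasis, Module.Basis.mem_span_image] at hx
  rw [← v.repr_apply_apply, ← v.coe_toBasis_repr_apply]
  by_contra h
  exact hi (hx (Finsupp.mem_support_iff.mpr h))

variable [Fintype ι] {T : E →ₗ[𝕜] E} {v : OrthonormalBasis ι 𝕜 E} {g : ι → ℝ}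

lemma re_inner_apply_eq_sum (hv : ∀ i, T (v i) = (g i : 𝕜) • v i) (x : E) :
    RCLike.re ⟪x, T x⟫_𝕜 = ∑ i, g i * ‖⟪v i, x⟫_𝕜‖ ^ 2 := by
  have hTx : T x = ∑ i, ((g i : 𝕜) * ⟪v i, x⟫_𝕜) • v i := by
    conv_lhs => rw [← v.sum_repr' x]
    simp only [map_sum, map_smul, hv, smul_smul, mul_comm]
  rw [hTx, inner_sum, map_sum]
  refine Finset.sum_congr rfl fun i _ => ?_
  rw [inner_smul_right, ← inner_conj_symm x (v i), mul_assoc, RCLike.mul_conj]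
  norm_cast

lemma re_inner_apply_le_of_mem_span (hv : ∀ i, T (v i) = (g i : 𝕜) • v i) {s : Set ι} {t : ℝ}
    (hs : ∀ i ∈ s, g i ≤ t) {x : E} (hx : x ∈ Submodule.span 𝕜 (v '' s)) :
    RCLike.re ⟪x, T x⟫_𝕜 ≤ t * ‖x‖ ^ 2 := by
  rw [re_inner_apply_eq_sum hv, ← v.sum_sq_norm_inner_right x, Finset.mul_sum]
  refine Finset.sum_le_sum fun i _ => ?_
  by_cases hi : i ∈ s
  · exact mul_le_mul_of_nonneg_right (hs i hi) (sq_nonneg _)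
  · simp [v.inner_eq_zero_of_mem_span hx hi]

lemma le_re_inner_apply_of_mem_span (hv : ∀ i, T (v i) = (g i : 𝕜) • v i) {s : Set ι} {t : ℝ}
    (hs : ∀ i ∈ s, t ≤ g i) {x : E} (hx : x ∈ Submodule.span 𝕜 (v '' s)) :
    t * ‖x‖ ^ 2 ≤ RCLike.re ⟪x, T x⟫_𝕜 := by
  rw [re_inner_apply_eq_sum hv, ← v.sum_sq_norm_inner_right x, Finset.mul_sum]
  refine Finset.sum_le_sum fun i _ => ?_
  by_cases hi : i ∈ s
  · exact mul_le_mul_of_nonneg_right (hs i hi) (sq_nonneg _)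
  · simp [v.inner_eq_zero_of_mem_span hx hi]

end EigenbasisForm

lemma le_of_re_inner_bounds_of_finrank_lt {𝕜 E : Type*} [RCLike 𝕜] [NormedAddCommGroup E]
    [InnerProductSpace 𝕜 E] [FiniteDimensional 𝕜 E] {T : E →ₗ[𝕜] E} {S W₁ W₂ : Submodule 𝕜 E}
    {c t : ℝ} (h₁ : W₁ ≤ S) (h₂ : W₂ ≤ S)
    (hdim : Module.finrank 𝕜 S < Module.finrank 𝕜 W₁ + Module.finrank 𝕜 W₂)
    (hW₁ : ∀ x ∈ W₁, RCLike.re ⟪x, T x⟫_𝕜 ≤ t * ‖x‖ ^ 2)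
    (hW₂ : ∀ x ∈ W₂, c * ‖x‖ ^ 2 ≤ RCLike.re ⟪x, T x⟫_𝕜) : c ≤ t := by
  obtain ⟨x, ⟨hx₁, hx₂⟩, hx⟩ := Submodule.exists_ne_zero_mem_inf_of_finrank_lt h₁ h₂ hdim
  have hpos : 0 < ‖x‖ ^ 2 := by positivity
  exact le_of_mul_le_mul_right ((hW₂ x hx₂).trans (hW₁ x hx₁)) hpos

namespace Matrix.IsHermitian

section

variable {𝕜 n : Type*} [RCLike 𝕜] [Fintype n] [DecidableEq n] {M : Matrix n n 𝕜}

lemma toEuclideanLin_eigenvectorBasis (hM : M.IsHermitian) (j : n) :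
    toEuclideanLin M (hM.eigenvectorBasis j) = (hM.eigenvalues j : 𝕜) • hM.eigenvectorBasis j := by
  rw [toLpLin_apply, hM.mulVec_eigenvectorBasis, RCLike.real_smul_eq_coe_smul (K := 𝕜)]
  rfl

end

variable {𝕜 : Type*} [RCLike 𝕜] {N : ℕ} {M : Matrix (Fin N) (Fin N) 𝕜} (hM : M.IsHermitian)

noncomputable def sortedEigenvalues : Fin N → ℝ :=
  hM.eigenvalues ∘ Tuple.sort hM.eigenvalues

noncomputable def sortedEigenvectorBasis : OrthonormalBasis (Fin N) 𝕜 (EuclideanSpace 𝕜 (Fin N)) :=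
  hM.eigenvectorBasis.reindex (Tuple.sort hM.eigenvalues).symm

lemma sortedEigenvalues_monotone : Monotone hM.sortedEigenvalues :=
  Tuple.monotone_sort _

lemma toEuclideanLin_sortedEigenvectorBasis (k : Fin N) :
    toEuclideanLin M (hM.sortedEigenvectorBasis k)
      = (hM.sortedEigenvalues k : 𝕜) • hM.sortedEigenvectorBasis k := by
  simp only [sortedEigenvectorBasis, OrthonormalBasis.reindex_apply, Equiv.symm_symm]
  exact hM.toEuclideanLin_eigenvectorBasis _

/-- One half of the Courant–Fischer min-max principle. -/
lemma sortedEigenvalues_le_of_forall_re_inner {k : Fin N} {t : ℝ}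
    {W : Submodule 𝕜 (EuclideanSpace 𝕜 (Fin N))} (hdim : k + 1 ≤ Module.finrank 𝕜 W)
    (hW : ∀ x ∈ W, RCLike.re ⟪x, toEuclideanLin M x⟫_𝕜 ≤ t * ‖x‖ ^ 2) :
    hM.sortedEigenvalues k ≤ t := by
  classical
  refine le_of_re_inner_bounds_of_finrank_lt le_top le_top ?_ hW
    (W₂ := Submodule.span 𝕜 (hM.sortedEigenvectorBasis '' ↑(Finset.Ici k)))
    fun x hx => le_re_inner_apply_of_mem_span hM.toEuclideanLin_sortedEigenvectorBasis
      (fun i hi => hM.sortedEigenvalues_monotone (Finset.mem_Ici.mp hi)) hx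
  rw [finrank_top, finrank_euclideanSpace_fin, OrthonormalBasis.finrank_span_image, Fin.card_Ici]
  omega

end Matrix.IsHermitian

lemma sortedEigs_eq_ofFn {N : ℕ} {M : Matrix (Fin N) (Fin N) ℂ} (hM : M.IsHermitian) :
    sortedEigs hM = List.ofFn hM.sortedEigenvalues := by
  have hperm : Finset.univ.val.map hM.eigenvalues = List.ofFn hM.sortedEigenvalues := by
    rw [← Fin.univ_val_map, IsHermitian.sortedEigenvalues, ← Multiset.map_map,
      Multiset.map_univ_val_equiv]
  rw [sortedEigs, hperm, Multiset.coe_sort, List.mergeSort_eq_self]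
  exact hM.sortedEigenvalues_monotone.sortedLE_ofFn.pairwise

lemma sortedEigs_getD {N : ℕ} {M : Matrix (Fin N) (Fin N) ℂ} (hM : M.IsHermitian) {k : ℕ}
    (hk : k < N) : (sortedEigs hM).getD k 0 = hM.sortedEigenvalues ⟨k, hk⟩ := by
  simp [sortedEigs_eq_ofFn, hk]

section LowEnergy

variable {n : Type*} [Fintype n] [DecidableEq n] {M : Matrix n n ℂ}

lemma mem_lowEnergy_of_apply_eq_smul {Δ μ : ℝ} {x : EuclideanSpace ℂ n}
    (hx : toEuclideanLin M x = (μ : ℂ) • x) (hμ : μ ≤ Δ) : x ∈ lowEnergy M Δ :=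
  Submodule.mem_iSup_of_mem μ <| Submodule.mem_iSup_of_mem hμ <|
    Module.End.mem_eigenspace_iff.mpr hx

lemma lowEnergy_eq_span (hM : M.IsHermitian) (Δ : ℝ) :
    lowEnergy M Δ = Submodule.span ℂ (hM.eigenvectorBasis '' {k | hM.eigenvalues k ≤ Δ}) := by
  have hb := hM.toEuclideanLin_eigenvectorBasis
  refine le_antisymm (iSup₂_le fun μ hμ x hx => ?_) (Submodule.span_le.mpr ?_)
  · rw [← hM.eigenvectorBasis.coe_toBasis, Module.Basis.mem_span_image]
    intro k hk
    have hne : ⟪hM.eigenvectorBasis k, x⟫_ℂ ≠ 0 := by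
      rwa [← hM.eigenvectorBasis.repr_apply_apply, ← hM.eigenvectorBasis.coe_toBasis_repr_apply,
        ← Finsupp.mem_support_iff]
    have hsymm := isSymmetric_toEuclideanLin_iff.mpr hM
    have hk : (hM.eigenvalues k : ℂ) = μ := by
      by_contra h
      exact hne (inner_eq_zero_symm.mp (hsymm.orthogonalFamily_eigenspaces.pairwise h
        (Module.End.mem_eigenspace_iff.mpr (hb k)) x hx))
    exact (Complex.ofReal_inj.mp hk).trans_le hμ
  · rintro _ ⟨k, hk, rfl⟩
    exact mem_lowEnergy_of_apply_eq_smul (hb k) hk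

end LowEnergy

section Kronecker

variable {𝕜 n m : Type*} [RCLike 𝕜]

noncomputable def kroneckerVec :
    EuclideanSpace 𝕜 n →ₗ[𝕜] EuclideanSpace 𝕜 m →ₗ[𝕜] EuclideanSpace 𝕜 (n × m) :=
  LinearMap.mk₂ 𝕜 (fun x y => WithLp.toLp 2 fun p => x p.1 * y p.2)
    (fun _ _ _ => by ext; simp [add_mul]) (fun _ _ _ => by ext; simp [mul_assoc])
    (fun _ _ _ => by ext; simp [mul_add]) (fun _ _ _ => by ext; simp [mul_left_comm])

lemma kroneckerVec_apply (x : EuclideanSpace 𝕜 n) (y : EuclideanSpace 𝕜 m) (p : n × m) :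
    kroneckerVec x y p = x p.1 * y p.2 := rfl

noncomputable def conjVec (x : EuclideanSpace 𝕜 n) : EuclideanSpace 𝕜 n :=
  WithLp.toLp 2 (star (WithLp.ofLp x))

lemma conjVec_apply (x : EuclideanSpace 𝕜 n) (i : n) : conjVec x i = star (x i) := rfl

lemma conjVec_smul (a : 𝕜) (x : EuclideanSpace 𝕜 n) : conjVec (a • x) = star a • conjVec x := by
  ext i
  simp [conjVec_apply]

variable [Fintype n] [Fintype m]

lemma inner_kroneckerVec (x x' : EuclideanSpace 𝕜 n) (y y' : EuclideanSpace 𝕜 m) :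
    ⟪kroneckerVec x y, kroneckerVec x' y'⟫_𝕜 = ⟪x, x'⟫_𝕜 * ⟪y, y'⟫_𝕜 := by
  simp only [PiLp.inner_apply, RCLike.inner_apply, kroneckerVec_apply, Finset.sum_mul_sum,
    Fintype.sum_prod_type, map_mul]
  exact Finset.sum_congr rfl fun _ _ => Finset.sum_congr rfl fun _ _ => by ring

lemma inner_conjVec (x y : EuclideanSpace 𝕜 n) : ⟪conjVec x, conjVec y⟫_𝕜 = ⟪y, x⟫_𝕜 := by
  simp only [PiLp.inner_apply, RCLike.inner_apply, conjVec_apply, RCLike.star_def,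
    RCLike.conj_conj]
  exact Finset.sum_congr rfl fun _ _ => mul_comm _ _

lemma Orthonormal.conjVec {ι : Type*} {b : ι → EuclideanSpace 𝕜 n} (hb : Orthonormal 𝕜 b) :
    Orthonormal 𝕜 fun i => conjVec (b i) := by
  classical
  rw [orthonormal_iff_ite] at hb ⊢
  intro i j
  rw [inner_conjVec, hb j i]
  simp only [eq_comm]

lemma orthonormal_kroneckerVec {ι κ : Type*} {f : κ → ι → EuclideanSpace 𝕜 n}
    {c : κ → EuclideanSpace 𝕜 m} (hf : ∀ k, Orthonormal 𝕜 (f k)) (hc : Orthonormal 𝕜 c) :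
    Orthonormal 𝕜 fun p : ι × κ => kroneckerVec (f p.2 p.1) (c p.2) := by
  classical
  rw [orthonormal_iff_ite]
  rintro ⟨i, k⟩ ⟨i', k'⟩
  rw [inner_kroneckerVec]
  by_cases hk : k = k'
  · subst hk
    simp [orthonormal_iff_ite.mp (hf k), hc.1 k]
  · simp [orthonormal_iff_ite.mp hc, hk]

variable [DecidableEq n] [DecidableEq m]

lemma toEuclideanLin_kronecker_kroneckerVec (A : Matrix n n 𝕜) (B : Matrix m m 𝕜)
    (x : EuclideanSpace 𝕜 n) (y : EuclideanSpace 𝕜 m) :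
    toEuclideanLin (A ⊗ₖ B) (kroneckerVec x y)
      = kroneckerVec (toEuclideanLin A x) (toEuclideanLin B y) := by
  ext p
  simp only [toLpLin_apply, kroneckerVec_apply, mulVec, dotProduct, kroneckerMap_apply,
    Finset.sum_mul_sum, Fintype.sum_prod_type]
  exact Finset.sum_congr rfl fun _ _ => Finset.sum_congr rfl fun _ _ => by ring

lemma toEuclideanLin_map_star_conjVec (A : Matrix n n 𝕜) (x : EuclideanSpace 𝕜 n) :
    toEuclideanLin (A.map star) (conjVec x) = conjVec (toEuclideanLin A x) := by
  ext i
  simp [mulVec, dotProduct, conjVec_apply, star_sum]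

theorem exists_orthonormal_eigenbasis_kronecker_add_map_star_kronecker {H : Matrix n n 𝕜}
    {P Q : Matrix m m 𝕜} (b : OrthonormalBasis n 𝕜 (EuclideanSpace 𝕜 n)) {g : n → ℝ}
    (hb : ∀ i, toEuclideanLin H (b i) = (g i : 𝕜) • b i) (hP : P.IsHermitian)
    (hPP : P * P = P) (hPQ : P + Q = 1) :
    ∃ Ψ : OrthonormalBasis (n × m) 𝕜 (EuclideanSpace 𝕜 (n × m)), ∀ p,
      toEuclideanLin (H ⊗ₖ P + H.map star ⊗ₖ Q) (Ψ p) = (g p.1 : 𝕜) • Ψ p := by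
  classical
  have he : ∀ k, hP.eigenvalues k = 0 ∨ hP.eigenvalues k = 1 := fun k => by
    simpa using IsIdempotentElem.spectrum_subset ℝ hPP (hP.eigenvalues_mem_spectrum_real k)
  have hQ : toEuclideanLin Q = LinearMap.id - toEuclideanLin P := by
    rw [eq_sub_of_add_eq' hPQ, map_sub, toLpLin_one]
  let f : m → n → EuclideanSpace 𝕜 n := fun k i =>
    if hP.eigenvalues k = 1 then b i else conjVec (b i)
  have hf : ∀ k, Orthonormal 𝕜 (f k) := fun k => by
    by_cases h : hP.eigenvalues k = 1
    · simp [f, h, b.orthonormal]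
    · simpa [f, h] using b.orthonormal.conjVec
  have hΨ := orthonormal_kroneckerVec hf hP.eigenvectorBasis.orthonormal
  refine ⟨OrthonormalBasis.mk hΨ (hΨ.linearIndependent.span_eq_top_of_card_eq_finrank'
    (by simp)).ge, ?_⟩
  rintro ⟨i, k⟩
  simp only [OrthonormalBasis.coe_mk, map_add, LinearMap.add_apply,
    toEuclideanLin_kronecker_kroneckerVec, hQ, LinearMap.sub_apply, LinearMap.id_apply,
    hP.toEuclideanLin_eigenvectorBasis]
  rcases he k with h | h
  · simp only [f, h, zero_ne_one, if_false, zero_smul, sub_zero, map_zero, zero_add]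
    rw [toEuclideanLin_map_star_conjVec, hb, conjVec_smul, RCLike.star_def, RCLike.conj_ofReal,
      map_smul, LinearMap.smul_apply]
  · simp only [f, h, if_true, RCLike.ofReal_one, one_smul, sub_self, map_zero, add_zero, hb,
      map_smul, LinearMap.smul_apply]

end Kronecker

section Compression

variable {𝕜 ι κ : Type*} [RCLike 𝕜] [Fintype ι] [Fintype κ] [DecidableEq ι]

lemma norm_toEuclideanLin_apply_le_opNorm (M : Matrix κ ι ℂ) (x : EuclideanSpace ℂ ι) :
    ‖toEuclideanLin M x‖ ≤ opNorm M * ‖x‖ :=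
  (LinearMap.toContinuousLinearMap (toEuclideanLin M)).le_opNorm x

variable [DecidableEq κ]

lemma inner_toEuclideanLin_conjTranspose_mul_mul (V : Matrix κ ι 𝕜) (M : Matrix κ κ 𝕜)
    (x y : EuclideanSpace 𝕜 ι) :
    ⟪toEuclideanLin V x, toEuclideanLin M (toEuclideanLin V y)⟫_𝕜
      = ⟪x, toEuclideanLin (Vᴴ * M * V) y⟫_𝕜 := by
  rw [toLpLin_mul_same, toLpLin_mul_same, LinearMap.comp_apply, LinearMap.comp_apply,
    toEuclideanLin_conjTranspose_eq_adjoint, LinearMap.adjoint_inner_right]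

lemma inner_toEuclideanLin_of_conjTranspose_mul_self {V : Matrix κ ι 𝕜} (hV : Vᴴ * V = 1)
    (x y : EuclideanSpace 𝕜 ι) : ⟪toEuclideanLin V x, toEuclideanLin V y⟫_𝕜 = ⟪x, y⟫_𝕜 := by
  rw [← LinearMap.adjoint_inner_right, ← toEuclideanLin_conjTranspose_eq_adjoint,
    ← LinearMap.comp_apply, ← toLpLin_mul_same, hV, toLpLin_one, LinearMap.id_apply]

lemma norm_toEuclideanLin_of_conjTranspose_mul_self {V : Matrix κ ι 𝕜} (hV : Vᴴ * V = 1)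
    (x : EuclideanSpace 𝕜 ι) : ‖toEuclideanLin V x‖ = ‖x‖ := by
  rw [@norm_eq_sqrt_re_inner 𝕜, @norm_eq_sqrt_re_inner 𝕜 _ _ _ _ x,
    inner_toEuclideanLin_of_conjTranspose_mul_self hV]

lemma injective_toEuclideanLin_of_conjTranspose_mul_self {V : Matrix κ ι 𝕜} (hV : Vᴴ * V = 1) :
    Function.Injective (toEuclideanLin V) := by
  refine Function.LeftInverse.injective (g := toEuclideanLin Vᴴ) fun x => ?_
  rw [← LinearMap.comp_apply, ← toLpLin_mul_same, hV, toLpLin_one, LinearMap.id_apply]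

lemma abs_re_inner_sub_le_of_opNorm_le {V : Matrix κ ι ℂ} (hV : Vᴴ * V = 1)
    {M : Matrix κ κ ℂ} {A : Matrix ι ι ℂ} {ε : ℝ}
    (hclose : opNorm (V * Vᴴ * M * (V * Vᴴ) - V * A * Vᴴ) ≤ ε) (x : EuclideanSpace ℂ ι) :
    |RCLike.re ⟪toEuclideanLin V x, toEuclideanLin M (toEuclideanLin V x)⟫_ℂ
      - RCLike.re ⟪x, toEuclideanLin A x⟫_ℂ| ≤ ε * ‖x‖ ^ 2 := by
  set Err := V * Vᴴ * M * (V * Vᴴ) - V * A * Vᴴ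
  set y := toEuclideanLin V x
  have hErr : Vᴴ * Err * V = Vᴴ * M * V - A := by
    have hVV : ∀ X : Matrix ι ι ℂ, Vᴴ * (V * X) = X := fun X => by
      rw [← Matrix.mul_assoc, hV, Matrix.one_mul]
    simp only [Err, Matrix.mul_sub, Matrix.sub_mul, Matrix.mul_assoc, hV, Matrix.mul_one, hVV]
  have hy : ⟪y, toEuclideanLin Err y⟫_ℂ
      = ⟪y, toEuclideanLin M y⟫_ℂ - ⟪x, toEuclideanLin A x⟫_ℂ := by
    rw [inner_toEuclideanLin_conjTranspose_mul_mul, hErr, map_sub, LinearMap.sub_apply,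
      inner_sub_right, ← inner_toEuclideanLin_conjTranspose_mul_mul]
  calc |RCLike.re ⟪y, toEuclideanLin M y⟫_ℂ - RCLike.re ⟪x, toEuclideanLin A x⟫_ℂ|
      = |RCLike.re ⟪y, toEuclideanLin Err y⟫_ℂ| := by rw [hy, map_sub]
    _ ≤ ‖y‖ * (opNorm Err * ‖y‖) := (RCLike.abs_re_le_norm _).trans <|
      (norm_inner_le_norm _ _).trans <| by gcongr; exact norm_toEuclideanLin_apply_le_opNorm _ _
    _ ≤ ε * ‖x‖ ^ 2 := by
      rw [norm_toEuclideanLin_of_conjTranspose_mul_self hV]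
      nlinarith [sq_nonneg ‖x‖]

end Compression

section Comparison

variable {ι : Type*} [Fintype ι] [DecidableEq ι] {N : ℕ} {M : Matrix (Fin N) (Fin N) ℂ}
  (hM : M.IsHermitian) {A : Matrix ι ι ℂ} {V : Matrix (Fin N) ι ℂ} (hV : Vᴴ * V = 1) {ε : ℝ}
  (hclose : ∀ x, |RCLike.re ⟪toEuclideanLin V x, toEuclideanLin M (toEuclideanLin V x)⟫_ℂ
      - RCLike.re ⟪x, toEuclideanLin A x⟫_ℂ| ≤ ε * ‖x‖ ^ 2)
  (Ψ : OrthonormalBasis ι ℂ (EuclideanSpace ℂ ι)) {g : ι → ℝ}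
  (hΨ : ∀ p, toEuclideanLin A (Ψ p) = (g p : ℂ) • Ψ p)
include hM hV hclose hΨ

lemma sortedEigenvalues_le_of_compression {s : Finset ι} {t : ℝ} (hs : ∀ p ∈ s, g p ≤ t)
    {k : Fin N} (hk : k + 1 ≤ s.card) : hM.sortedEigenvalues k ≤ t + ε := by
  have hinj := injective_toEuclideanLin_of_conjTranspose_mul_self hV
  refine hM.sortedEigenvalues_le_of_forall_re_inner
    (W := (Submodule.span ℂ (Ψ '' s)).map (toEuclideanLin V)) ?_ ?_
  · rwa [← (Submodule.equivMapOfInjective _ hinj _).finrank_eq, Ψ.finrank_span_image]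
  · rintro _ ⟨x, hx, rfl⟩
    have hA := re_inner_apply_le_of_mem_span hΨ hs hx
    rw [norm_toEuclideanLin_of_conjTranspose_mul_self hV]
    linarith [(abs_le.mp (hclose x)).2]

lemma le_sortedEigenvalues_of_compression {Δ : ℝ}
    (hrange : LinearMap.range (toEuclideanLin V) = lowEnergy M Δ) {s : Finset ι} {t : ℝ}
    (hs : ∀ p ∈ s, t ≤ g p) {k : Fin N} (hk : k < Fintype.card ι)
    (hdim : Fintype.card ι < k + 1 + s.card) : t - ε ≤ hM.sortedEigenvalues k := by
  classical
  set B := hM.sortedEigenvectorBasis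
  have hinj := injective_toEuclideanLin_of_conjTranspose_mul_self hV
  have hS : Module.finrank ℂ (lowEnergy M Δ) = Fintype.card ι := by
    rw [← hrange, LinearMap.finrank_range_of_inj hinj, finrank_euclideanSpace]
  have hkΔ : hM.sortedEigenvalues k ≤ Δ := by
    refine hM.sortedEigenvalues_le_of_forall_re_inner (W := lowEnergy M Δ) (by omega)
      fun x hx => ?_
    rw [lowEnergy_eq_span hM] at hx
    exact re_inner_apply_le_of_mem_span hM.toEuclideanLin_eigenvectorBasis (fun _ h => h) hx
  refine le_of_re_inner_bounds_of_finrank_lt (S := lowEnergy M Δ)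
    (W₁ := Submodule.span ℂ (B '' ↑(Finset.Iic k)))
    (W₂ := (Submodule.span ℂ (Ψ '' s)).map (toEuclideanLin V)) ?_ ?_ ?_
    (fun x hx => re_inner_apply_le_of_mem_span hM.toEuclideanLin_sortedEigenvectorBasis
      (fun i hi => hM.sortedEigenvalues_monotone (Finset.mem_Iic.mp hi)) hx) ?_
  · rw [Submodule.span_le]
    rintro _ ⟨i, hi, rfl⟩
    exact mem_lowEnergy_of_apply_eq_smul (hM.toEuclideanLin_sortedEigenvectorBasis i)
      ((hM.sortedEigenvalues_monotone (Finset.mem_Iic.mp hi)).trans hkΔ)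
  · exact hrange ▸ LinearMap.map_le_range
  · rwa [hS, ← (Submodule.equivMapOfInjective _ hinj _).finrank_eq, Ψ.finrank_span_image,
      B.finrank_span_image, Fin.card_Iic]
  · rintro _ ⟨x, hx, rfl⟩
    have hA := le_re_inner_apply_of_mem_span hΨ hs hx
    rw [norm_toEuclideanLin_of_conjTranspose_mul_self hV]
    linarith [(abs_le.mp (hclose x)).1]

end Comparison

theorem eigenvalue_comparison_of_simulation_general
    (D D' r : ℕ)
    (H : Matrix (Fin D) (Fin D) ℂ) (hH : H.IsHermitian)
    (H' : Matrix (Fin D') (Fin D') ℂ) (hH' : H'.IsHermitian)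
    (P Q : Matrix (Fin r) (Fin r) ℂ)
    (hPherm : P.IsHermitian) (hPproj : P * P = P)
    (hPQone : P + Q = 1)
    (Δ ε : ℝ)
    (Vt : Matrix (Fin D') (Fin D × Fin r) ℂ)
    (hVt_iso : Vtᴴ * Vt = 1)
    (hVt_range : LinearMap.range (Matrix.toEuclideanLin Vt) = lowEnergy H' Δ)
    (hclose : opNorm ((Vt * Vtᴴ) * H' * (Vt * Vtᴴ)
        - Vt * (H ⊗ₖ P + (H.map star) ⊗ₖ Q) * Vtᴴ) ≤ ε)
    (i j : ℕ) (hi : i < D) (hj : j < D')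
    (hjlo : i * r ≤ j) (hjhi : j < (i + 1) * r) :
    |(sortedEigs hH).getD i 0 - (sortedEigs hH').getD j 0| ≤ ε := by
  obtain ⟨Ψ, hΨ⟩ := exists_orthonormal_eigenbasis_kronecker_add_map_star_kronecker
    hH.sortedEigenvectorBasis hH.toEuclideanLin_sortedEigenvectorBasis hPherm hPproj hPQone
  have hclose' := abs_re_inner_sub_le_of_opNorm_le hVt_iso hclose
  have hmono := hH.sortedEigenvalues_monotone
  have hDi : (D - i) * r + i * r = D * r := by rw [← add_mul, Nat.sub_add_cancel hi.le]
  have hiD : (i + 1) * r ≤ D * r := Nat.mul_le_mul_right r hi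
  rw [sortedEigs_getD hH hi, sortedEigs_getD hH' hj, abs_le]
  constructor
  · have := sortedEigenvalues_le_of_compression hH' hVt_iso hclose' Ψ hΨ
      (s := Finset.Iic (⟨i, hi⟩ : Fin D) ×ˢ Finset.univ) (k := ⟨j, hj⟩)
      (fun p hp => hmono (Finset.mem_Iic.mp (Finset.mem_product.mp hp).1))
      (by simp only [Finset.card_product, Fin.card_Iic, Finset.card_univ, Fintype.card_fin]; omega)
    linarith
  · have := le_sortedEigenvalues_of_compression hH' hVt_iso hclose' Ψ hΨ hVt_range
      (s := Finset.Ici (⟨i, hi⟩ : Fin D) ×ˢ Finset.univ) (k := ⟨j, hj⟩)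
      (fun p hp => hmono (Finset.mem_Ici.mp (Finset.mem_product.mp hp).1))
      (by simp only [Fintype.card_prod, Fintype.card_fin]; omega)
      (by simp only [Fintype.card_prod, Fintype.card_fin, Finset.card_product, Fin.card_Ici,
        Finset.card_univ]; omega)
    linarith

/-- If `Ṽ` is an isometry onto `S_{≤Δ}(H')` and
`‖H'|_{≤Δ} − Ṽ(H⊗P + H̄⊗Q)Ṽ†‖ ≤ ε` (where `Ṽ Ṽᴴ` is the orthogonal projector onto
`S_{≤Δ}(H')`), then the `j`-th smallest eigenvalue of `H'` is within `ε` of the `i`-th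
smallest eigenvalue of `H` for all `i·r ≤ j < (i+1)·r` (0-indexed; `r = p + q`). -/
theorem eigenvalue_comparison_of_simulation
    (D D' p q r : ℕ) (hrpq : r = p + q) (hr : 1 ≤ r)
    (H : Matrix (Fin D) (Fin D) ℂ) (hH : H.IsHermitian)
    (H' : Matrix (Fin D') (Fin D') ℂ) (hH' : H'.IsHermitian)
    (P Q : Matrix (Fin r) (Fin r) ℂ)
    (hPherm : P.IsHermitian) (hPproj : P * P = P)
    (hQherm : Q.IsHermitian) (hQproj : Q * Q = Q)
    (hPQ : P * Q = 0) (hPQone : P + Q = 1)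
    (hrankP : P.rank = p) (hrankQ : Q.rank = q)
    (Δ ε : ℝ) (hΔ : 0 ≤ Δ) (hε : 0 ≤ ε)
    (Vt : Matrix (Fin D') (Fin D × Fin r) ℂ)
    (hVt_iso : Vtᴴ * Vt = 1)
    (hVt_range : LinearMap.range (Matrix.toEuclideanLin Vt) = lowEnergy H' Δ)
    (hclose : opNorm ((Vt * Vtᴴ) * H' * (Vt * Vtᴴ)
        - Vt * (H ⊗ₖ P + (H.map star) ⊗ₖ Q) * Vtᴴ) ≤ ε)
    (i j : ℕ) (hi : i < D) (hj : j < D')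
    (hjlo : i * r ≤ j) (hjhi : j < (i + 1) * r) :
    |(sortedEigs hH).getD i 0 - (sortedEigs hH').getD j 0| ≤ ε :=
  eigenvalue_comparison_of_simulation_general D D' r H hH H' hH' P Q hPherm hPproj hPQone Δ ε Vt
    hVt_iso hVt_range hclose i j hi hj hjlo hjhi
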